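/- Let C be a triangulated category with a weight structure w, and let M be an object in the envelope of a class D ⊆ Ob C such that every element of D either lies in C_{w≥i} or lies in C_{w≤i−1}; write D = D_1 ∪ D_2 with D_1 ⊆ C_{w≥i} and D_2 ⊆ C_{w≤i−1}. If Hom(N, M) = 0 for every N ∈ D_2, then M ∈ C_{w≥i}. (Assume C is Karoubian.) -/

import Mathlib

open CategoryTheory CategoryTheory.Limits CategoryTheory.Pretriangulated

universe v u v₂ u₂

/-- `X` is a retract of `Y`: the identity of `X` factors through `Y`. -/
def IsRetract {C : Type u} [Category.{v} C] (X Y : C) : Prop :=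
  ∃ (i : X ⟶ Y) (r : Y ⟶ X), i ≫ r = 𝟙 X

variable (C : Type u) [Category.{v} C] [HasZeroObject C] [Preadditive C] [HasShift C ℤ]
  [∀ n : ℤ, (shiftFunctor C n).Additive] [Pretriangulated C]

/-- A weight structure on a triangulated category `C`, given by the classes
`LE = C_{w≤0}` and `GE = C_{w≥0}`. -/
structure WeightStructure where
  LE : Set C
  GE : Set C
  retract_mem_LE : ∀ ⦃X Y : C⦄, IsRetract X Y → Y ∈ LE → X ∈ LE
  retract_mem_GE : ∀ ⦃X Y : C⦄, IsRetract X Y → Y ∈ GE → X ∈ GE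
  shift_LE : ∀ X ∈ LE, X⟦(-1 : ℤ)⟧ ∈ LE
  shift_GE : ∀ X ∈ GE, X⟦(1 : ℤ)⟧ ∈ GE
  orthogonal : ∀ ⦃X Y : C⦄, X ∈ LE → Y ∈ GE → ∀ f : X ⟶ Y⟦(1 : ℤ)⟧, f = 0
  exists_decomp : ∀ M : C, ∃ (B A : C) (f : B ⟶ M) (g : M ⟶ A) (h : A ⟶ B⟦(1 : ℤ)⟧),
    (Triangle.mk f g h ∈ distTriang C) ∧ B ∈ LE ∧ A⟦(-1 : ℤ)⟧ ∈ GE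

namespace WeightStructure

variable {C}

/-- `C_{w≤n} = C_{w≤0}[n]`. -/
def le (w : WeightStructure C) (n : ℤ) : Set C := {X : C | X⟦(-n)⟧ ∈ w.LE}

/-- `C_{w≥n} = C_{w≥0}[n]`. -/
def ge (w : WeightStructure C) (n : ℤ) : Set C := {X : C | X⟦(-n)⟧ ∈ w.GE}

/-- `C_{w=n} = C_{w≤n} ∩ C_{w≥n}`. -/
def heart (w : WeightStructure C) (n : ℤ) : Set C := w.le n ∩ w.ge n

end WeightStructure

variable {C}

/-- The envelope of a class `D`: the smallest class containing `D` and all zero objects that is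
closed under extensions and retracts. -/
inductive Envelope (D : Set C) : C → Prop
  | of (X : C) (hX : X ∈ D) : Envelope D X
  | zero (Z : C) (hZ : IsZero Z) : Envelope D Z
  | ext (T : Triangle C) (hT : T ∈ distTriang C)
      (h₁ : Envelope D T.obj₁) (h₃ : Envelope D T.obj₃) : Envelope D T.obj₂
  | retract (X Y : C) (h : IsRetract X Y) (hY : Envelope D Y) : Envelope D X

/-!
By induction on the envelope, every object of the envelope of `D` is a retract of an object `Y`
sitting in a distinguished triangle `P → Y → Q → P⟦1⟧` with `P` in the envelope of `D₂` and
`Q ∈ C_{w≥i}`. In the extension step, `Hom(D₂, C_{w≥i}⟦1⟧) = 0` lifts the connecting map of the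
lower parts to `δ : P₂ → P₁⟦1⟧`; the extension `P` classified by `δ` maps to the middle object,
and the four lemma for `Hom(B, -)`, `B ∈ C_{w≤i-1}`, shows that the cone of this map is
orthogonal to `C_{w≤i-1}`, i.e. lies in `C_{w≥i}`. If the ends of a triangle are retracts of
`Y₁` and `Y₃`, the five lemma makes its middle a retract of an extension of `Y₃` by `Y₁`.
Finally, every map from `C_{w≤i-1}` to `M` factors through `P`, and `Hom(P, M) = 0` because
`Hom(D₂, M) = 0`; so `M` is right orthogonal to `C_{w≤i-1}`, hence lies in `C_{w≥i}`.
-/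

open ObjectProperty ZeroObject

lemma isRetract_iff_nonempty_retract {D : Type*} [Category D] {X Y : D} :
    IsRetract X Y ↔ Nonempty (Retract X Y) :=
  ⟨fun ⟨i, r, h⟩ => ⟨⟨i, r, h⟩⟩, fun ⟨h⟩ => ⟨h.i, h.r, h.retract⟩⟩

lemma exists_eq_comp_shift_map_mor₁ (T : Triangle C) (hT : T ∈ distTriang C) {X : C}
    (f : X ⟶ T.obj₂⟦(1 : ℤ)⟧) (hf : f ≫ T.mor₂⟦(1 : ℤ)⟧' = 0) :
    ∃ g : X ⟶ T.obj₁⟦(1 : ℤ)⟧, f = g ≫ T.mor₁⟦(1 : ℤ)⟧' := by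
  obtain ⟨g, hg⟩ : ∃ g : X ⟶ T.obj₁⟦(1 : ℤ)⟧, f = g ≫ (-T.mor₁⟦(1 : ℤ)⟧') :=
    Triangle.coyoneda_exact₁ _ (rot_of_distTriang _ hT) f hf
  exact ⟨-g, by rw [hg, Preadditive.comp_neg, Preadditive.neg_comp]⟩

section

variable {T T' : Triangle C} (φ : T ⟶ T') {B : C}

/-- Surjective half of the four lemma for the long exact sequences `Hom(B, -)`. -/
lemma exists_eq_comp_hom₂ (hT : T ∈ distTriang C) (hT' : T' ∈ distTriang C)
    (h₁ : ∀ f : B ⟶ T'.obj₁, ∃ g, f = g ≫ φ.hom₁)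
    (h₃ : ∀ f : B ⟶ T'.obj₃, ∃ g, f = g ≫ φ.hom₃)
    (h₄ : ∀ f : B ⟶ T.obj₁⟦(1 : ℤ)⟧, f ≫ φ.hom₁⟦(1 : ℤ)⟧' = 0 → f = 0)
    (f : B ⟶ T'.obj₂) : ∃ g, f = g ≫ φ.hom₂ := by
  obtain ⟨g₃, hg₃⟩ := h₃ (f ≫ T'.mor₂)
  have hg₃₀ : g₃ ≫ T.mor₃ = 0 := h₄ _ <| by
    rw [Category.assoc, φ.comm₃, ← Category.assoc, ← hg₃, Category.assoc,
      comp_distTriang_mor_zero₂₃ _ hT', comp_zero]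
  obtain ⟨ψ, hψ⟩ := Triangle.coyoneda_exact₃ _ hT g₃ hg₃₀
  obtain ⟨j, hj⟩ := Triangle.coyoneda_exact₂ _ hT' (f - ψ ≫ φ.hom₂) <| by
    rw [Preadditive.sub_comp, Category.assoc, ← φ.comm₂, ← Category.assoc, ← hψ, ← hg₃,
      sub_self]
  obtain ⟨g₁, rfl⟩ := h₁ j
  refine ⟨ψ + g₁ ≫ T.mor₁, ?_⟩
  rw [Preadditive.add_comp, Category.assoc, φ.comm₁, ← Category.assoc, ← hj, add_sub_cancel]

/-- Injective half of the four lemma for the long exact sequences `Hom(B, -)`. -/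
lemma eq_zero_of_comp_shift_map_hom₂ (hT : T ∈ distTriang C) (hT' : T' ∈ distTriang C)
    (h₁ : ∀ f : B ⟶ T.obj₁⟦(1 : ℤ)⟧, f ≫ φ.hom₁⟦(1 : ℤ)⟧' = 0 → f = 0)
    (h₃ : ∀ f : B ⟶ T'.obj₃, ∃ g, f = g ≫ φ.hom₃)
    (h₃' : ∀ f : B ⟶ T.obj₃⟦(1 : ℤ)⟧, f ≫ φ.hom₃⟦(1 : ℤ)⟧' = 0 → f = 0)
    (a : B ⟶ T.obj₂⟦(1 : ℤ)⟧) (ha : a ≫ φ.hom₂⟦(1 : ℤ)⟧' = 0) : a = 0 := by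
  have ha₃ : a ≫ T.mor₂⟦(1 : ℤ)⟧' = 0 := h₃' _ <| by
    rw [Category.assoc, ← Functor.map_comp, φ.comm₂, Functor.map_comp, ← Category.assoc, ha,
      zero_comp]
  obtain ⟨a', rfl⟩ := exists_eq_comp_shift_map_mor₁ _ hT a ha₃
  obtain ⟨z, hz⟩ := Triangle.coyoneda_exact₁ _ hT' (a' ≫ φ.hom₁⟦(1 : ℤ)⟧') <| by
    rw [Category.assoc, ← Functor.map_comp, ← φ.comm₁, Functor.map_comp, ← Category.assoc, ha]
  obtain ⟨z', rfl⟩ := h₃ z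
  have : a' = z' ≫ T.mor₃ := sub_eq_zero.mp <| h₁ _ <| by
    rw [Preadditive.sub_comp, hz, Category.assoc, Category.assoc, φ.comm₃, sub_self]
  rw [this, Category.assoc, comp_distTriang_mor_zero₃₁ _ hT, comp_zero]

end

lemma exists_distTriang_retract_of_retract (T : Triangle C) (hT : T ∈ distTriang C)
    {Y₁ Y₃ : C} (h₁ : Retract T.obj₁ Y₁) (h₃ : Retract T.obj₃ Y₃) :
    ∃ (Y : C) (u : Y₁ ⟶ Y) (v : Y ⟶ Y₃) (d : Y₃ ⟶ Y₁⟦(1 : ℤ)⟧),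
      Triangle.mk u v d ∈ distTriang C ∧ Nonempty (Retract T.obj₂ Y) := by
  obtain ⟨Y, u, v, hTY⟩ := distinguished_cocone_triangle₂ (h₃.r ≫ T.mor₃ ≫ h₁.i⟦(1 : ℤ)⟧')
  obtain ⟨Φ, hΦ₁, hΦ₂⟩ :
      ∃ Φ : T.obj₂ ⟶ Y, T.mor₁ ≫ Φ = h₁.i ≫ u ∧ T.mor₂ ≫ h₃.i = Φ ≫ v :=
    complete_distinguished_triangle_morphism₂ T _ hT hTY h₁.i h₃.i (h₃.retract_assoc _).symm
  obtain ⟨Ψ, hΨ₁, hΨ₂⟩ :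
      ∃ Ψ : Y ⟶ T.obj₂, u ≫ Ψ = h₁.r ≫ T.mor₁ ∧ v ≫ h₃.r = Ψ ≫ T.mor₂ :=
    complete_distinguished_triangle_morphism₂ _ T hTY hT h₁.r h₃.r <| by
      show (h₃.r ≫ T.mor₃ ≫ h₁.i⟦(1 : ℤ)⟧') ≫ h₁.r⟦(1 : ℤ)⟧' = h₃.r ≫ T.mor₃
      rw [Category.assoc, Category.assoc, ← Functor.map_comp, h₁.retract,
        CategoryTheory.Functor.map_id, Category.comp_id]
  let e : T ⟶ T := Triangle.homMk _ _ (𝟙 _) (Φ ≫ Ψ) (𝟙 _)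
    (by rw [reassoc_of% hΦ₁, hΨ₁, h₁.retract_assoc, Category.id_comp])
    (by rw [Category.assoc, ← hΨ₂, ← reassoc_of% hΦ₂, h₃.retract, Category.comp_id])
  have : IsIso (Φ ≫ Ψ) :=
    isIso₂_of_isIso₁₃ e hT hT (inferInstanceAs (IsIso (𝟙 _))) (inferInstanceAs (IsIso (𝟙 _)))
  exact ⟨Y, u, v, _, hTY, ⟨Φ, Ψ ≫ inv (Φ ≫ Ψ), by rw [← Category.assoc, IsIso.hom_inv_id]⟩⟩

lemma Envelope.hom_eq_zero {D : Set C} {M : C} (horth : ∀ N ∈ D, ∀ f : N ⟶ M, f = 0)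
    {E : C} (hE : Envelope D E) (f : E ⟶ M) : f = 0 := by
  induction hE with
  | of X hX => exact horth X hX f
  | zero Z hZ => exact hZ.eq_of_src f 0
  | ext T hT _ _ ih₁ ih₃ =>
    obtain ⟨g, rfl⟩ := Triangle.yoneda_exact₂ _ hT f (ih₁ _)
    rw [ih₃ g, comp_zero]
  | retract X Y hXY _ ih =>
    obtain ⟨i, r, hir⟩ := hXY
    rw [← Category.id_comp f, ← hir, Category.assoc, ih (r ≫ f), comp_zero]

namespace WeightStructure

variable (w : WeightStructure C)

lemma retract_mem_ge {X Y : C} (h : Retract X Y) {n : ℤ} (hY : Y ∈ w.ge n) : X ∈ w.ge n :=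
  w.retract_mem_GE (isRetract_iff_nonempty_retract.2 ⟨h.map (shiftFunctor C (-n))⟩) hY

lemma hom_eq_zero {n : ℤ} {B A : C} (hB : B ∈ w.le (n - 1)) (hA : A ∈ w.ge n) (f : B ⟶ A) :
    f = 0 := by
  let e : A⟦-(n - 1)⟧ ≅ A⟦-n⟧⟦(1 : ℤ)⟧ :=
    (shiftFunctorAdd' C (-n) 1 (-(n - 1)) (by ring)).app A
  have h : f⟦-(n - 1)⟧' ≫ e.hom = 0 := w.orthogonal hB hA _
  apply (shiftFunctor C (-(n - 1))).map_injective
  rw [Functor.map_zero, ← Category.comp_id (f⟦_⟧'), ← e.hom_inv_id, ← Category.assoc, h,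
    zero_comp]

lemma shift_one_mem_ge {n : ℤ} {X : C} (hX : X ∈ w.ge n) : X⟦(1 : ℤ)⟧ ∈ w.ge n :=
  w.retract_mem_GE (isRetract_iff_nonempty_retract.2
    ⟨.ofIso ((shiftFunctorComm C 1 (-n)).app X)⟩) (w.shift_GE _ hX)

lemma extensionProduct_le_ge (n : ℤ) (M : C) :
    extensionProduct (· ∈ w.le n) (· ∈ w.ge (n + 1)) M := by
  obtain ⟨B, A, f, g, h, hT, hB, hA⟩ := w.exists_decomp (M⟦-n⟧)
  refine prop_of_iso (extensionProduct (· ∈ w.le n) (· ∈ w.ge (n + 1)))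
    ((shiftFunctorCompIsoId C (-n) n (by ring)).app M)
    ⟨_, _, _, _, _, Triangle.shift_distinguished _ hT n, ?_, ?_⟩
  · exact w.retract_mem_LE (isRetract_iff_nonempty_retract.2
      ⟨.ofIso ((shiftFunctorCompIsoId C n (-n) (by ring)).app B)⟩) hB
  · exact w.retract_mem_GE (isRetract_iff_nonempty_retract.2
      ⟨.ofIso ((shiftFunctorAdd' C n (-(n + 1)) (-1) (by ring)).app A).symm⟩) hA

lemma mem_ge_of_hom_eq_zero {n : ℤ} {Y : C} (hY : ∀ B ∈ w.le (n - 1), ∀ f : B ⟶ Y, f = 0) :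
    Y ∈ w.ge n := by
  obtain ⟨B, A, f, g, h, hT, hB, hA⟩ := w.extensionProduct_le_ge (n - 1) Y
  obtain ⟨r, hr⟩ := Triangle.yoneda_exact₂ _ hT (𝟙 Y) ((Category.comp_id f).trans (hY B hB f))
  exact w.retract_mem_ge ⟨g, r, hr.symm⟩ (by rwa [sub_add_cancel] at hA)

lemma mem_ge_of_isZero (n : ℤ) {Z : C} (hZ : IsZero Z) : Z ∈ w.ge n :=
  w.mem_ge_of_hom_eq_zero fun _ _ f => hZ.eq_of_tgt f 0

lemma exists_eq_comp_of_distTriang {n : ℤ} {P X Q B : C} {u : P ⟶ X} {v : X ⟶ Q}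
    {d : Q ⟶ P⟦(1 : ℤ)⟧} (hT : Triangle.mk u v d ∈ distTriang C) (hQ : Q ∈ w.ge n)
    (hB : B ∈ w.le (n - 1)) (f : B ⟶ X) : ∃ g, f = g ≫ u :=
  Triangle.coyoneda_exact₂ _ hT f (w.hom_eq_zero hB hQ _)

lemma eq_zero_of_comp_shift_map_eq_zero {n : ℤ} {P X Q B : C} {u : P ⟶ X} {v : X ⟶ Q}
    {d : Q ⟶ P⟦(1 : ℤ)⟧} (hT : Triangle.mk u v d ∈ distTriang C) (hQ : Q ∈ w.ge n)
    (hB : B ∈ w.le (n - 1)) (f : B ⟶ P⟦(1 : ℤ)⟧) (hf : f ≫ u⟦(1 : ℤ)⟧' = 0) : f = 0 := by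
  obtain ⟨g, rfl⟩ : ∃ g : B ⟶ Q, f = g ≫ d := Triangle.coyoneda_exact₁ _ hT f hf
  rw [w.hom_eq_zero hB hQ g, zero_comp]

lemma mem_ge_of_distTriang {n : ℤ} {P Y Q : C} {φ : P ⟶ Y} {v : Y ⟶ Q} {d : Q ⟶ P⟦(1 : ℤ)⟧}
    (hT : Triangle.mk φ v d ∈ distTriang C)
    (hlift : ∀ B ∈ w.le (n - 1), ∀ f : B ⟶ Y, ∃ g, f = g ≫ φ)
    (hinj : ∀ B ∈ w.le (n - 1), ∀ a : B ⟶ P⟦(1 : ℤ)⟧, a ≫ φ⟦(1 : ℤ)⟧' = 0 → a = 0) :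
    Q ∈ w.ge n := by
  have hφv : φ ≫ v = 0 := comp_distTriang_mor_zero₁₂ _ hT
  have hdφ : d ≫ φ⟦(1 : ℤ)⟧' = 0 := comp_distTriang_mor_zero₃₁ _ hT
  refine w.mem_ge_of_hom_eq_zero fun B hB f => ?_
  have hfd : f ≫ d = 0 := hinj B hB _ (by rw [Category.assoc, hdφ, comp_zero])
  obtain ⟨f', rfl⟩ : ∃ f' : B ⟶ Y, f = f' ≫ v := Triangle.coyoneda_exact₃ _ hT f hfd
  obtain ⟨g, rfl⟩ := hlift B hB f'
  rw [Category.assoc, hφv, comp_zero]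

end WeightStructure

section

variable (w : WeightStructure C) {n : ℤ} {D₂ : Set C}

lemma extensionProduct_envelope_ge_of_distTriang (hD₂ : D₂ ⊆ w.le (n - 1))
    (T : Triangle C) (hT : T ∈ distTriang C)
    (h₁ : extensionProduct (Envelope D₂) (· ∈ w.ge n) T.obj₁)
    (h₃ : extensionProduct (Envelope D₂) (· ∈ w.ge n) T.obj₃) :
    extensionProduct (Envelope D₂) (· ∈ w.ge n) T.obj₂ := by
  obtain ⟨P₁, Q₁, u₁, v₁, w₁, hT₁, hP₁, hQ₁⟩ := h₁
  obtain ⟨P₂, Q₂, u₂, v₂, w₂, hT₂, hP₂, hQ₂⟩ := h₃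
  have h₀ : (u₂ ≫ T.mor₃) ≫ v₁⟦(1 : ℤ)⟧' = 0 := Envelope.hom_eq_zero
    (fun N hN _ => w.hom_eq_zero (hD₂ hN) (w.shift_one_mem_ge hQ₁) _) hP₂ _
  obtain ⟨δ, hδ⟩ := exists_eq_comp_shift_map_mor₁ _ hT₁ _ h₀
  obtain ⟨P, q₁, q₂, hTP⟩ := distinguished_cocone_triangle₂ δ
  obtain ⟨φ, hφ₁, hφ₂⟩ := complete_distinguished_triangle_morphism₂ _ T hTP hT u₁ u₂ hδ.symm
  obtain ⟨Q, v, d, hTQ⟩ := distinguished_cocone_triangle φ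
  let Φ : Triangle.mk q₁ q₂ δ ⟶ T := Triangle.homMk _ _ u₁ φ u₂ hφ₁ hφ₂ hδ.symm
  refine ⟨P, Q, φ, v, d, hTQ, Envelope.ext _ hTP hP₁ hP₂, w.mem_ge_of_distTriang hTQ ?_ ?_⟩
  · exact fun B hB => exists_eq_comp_hom₂ Φ hTP hT
      (w.exists_eq_comp_of_distTriang hT₁ hQ₁ hB) (w.exists_eq_comp_of_distTriang hT₂ hQ₂ hB)
      (w.eq_zero_of_comp_shift_map_eq_zero hT₁ hQ₁ hB)
  · exact fun B hB => eq_zero_of_comp_shift_map_hom₂ Φ hTP hT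
      (w.eq_zero_of_comp_shift_map_eq_zero hT₁ hQ₁ hB)
      (w.exists_eq_comp_of_distTriang hT₂ hQ₂ hB)
      (w.eq_zero_of_comp_shift_map_eq_zero hT₂ hQ₂ hB)

lemma retractClosure_extensionProduct_of_envelope {D D₁ : Set C} (hD : D = D₁ ∪ D₂)
    (hD₁ : D₁ ⊆ w.ge n) (hD₂ : D₂ ⊆ w.le (n - 1)) {M : C} (hM : Envelope D M) :
    retractClosure (extensionProduct (Envelope D₂) (· ∈ w.ge n)) M := by
  induction hM with
  | of X hX =>
    refine prop_retractClosure ?_ (.refl X)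
    rcases hD ▸ hX with hX | hX
    · exact ⟨0, X, 0, 𝟙 X, 0, contractible_distinguished₁ X, Envelope.zero _ (isZero_zero C),
        hD₁ hX⟩
    · exact ⟨X, 0, 𝟙 X, 0, 0, contractible_distinguished X, Envelope.of X hX,
        w.mem_ge_of_isZero n (isZero_zero C)⟩
  | zero Z hZ =>
    refine prop_retractClosure ?_ (.refl Z)
    exact ⟨0, Z, 0, 𝟙 Z, 0, contractible_distinguished₁ Z, Envelope.zero _ (isZero_zero C),
      w.mem_ge_of_isZero n hZ⟩
  | ext T hT _ _ ih₁ ih₃ =>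
    obtain ⟨Y₁, hY₁, ⟨r₁⟩⟩ := ih₁
    obtain ⟨Y₃, hY₃, ⟨r₃⟩⟩ := ih₃
    obtain ⟨Y, u, v, d, hTY, ⟨r⟩⟩ := exists_distTriang_retract_of_retract T hT r₁ r₃
    exact prop_retractClosure
      (extensionProduct_envelope_ge_of_distTriang w hD₂ (Triangle.mk u v d) hTY hY₁ hY₃) r
  | retract X Y hXY _ ih =>
    obtain ⟨Y', hY', ⟨r⟩⟩ := ih
    exact prop_retractClosure hY' ((isRetract_iff_nonempty_retract.1 hXY).some.trans r)

end

theorem stmt_15_general (w : WeightStructure C) (i : ℤ)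
    (D D₁ D₂ : Set C) (hD : D = D₁ ∪ D₂)
    (hD₁ : D₁ ⊆ w.ge i) (hD₂ : D₂ ⊆ w.le (i - 1))
    (M : C) (hM : Envelope D M)
    (horth : ∀ N ∈ D₂, ∀ f : N ⟶ M, f = 0) :
    M ∈ w.ge i := by
  obtain ⟨Y, ⟨P, Q, u, v, d, hT, hP, hQ⟩, ⟨r⟩⟩ :=
    retractClosure_extensionProduct_of_envelope w hD hD₁ hD₂ hM
  refine w.mem_ge_of_hom_eq_zero fun B hB f => ?_
  obtain ⟨g, hg⟩ := w.exists_eq_comp_of_distTriang hT hQ hB (f ≫ r.i)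
  calc f = (f ≫ r.i) ≫ r.r := by simp
    _ = g ≫ u ≫ r.r := by rw [hg, Category.assoc]
    _ = 0 := by rw [Envelope.hom_eq_zero horth hP (u ≫ r.r), comp_zero]

theorem stmt_15 (w : WeightStructure C) [IsIdempotentComplete C] (i : ℤ)
    (D D₁ D₂ : Set C) (hD : D = D₁ ∪ D₂)
    (hD₁ : D₁ ⊆ w.ge i) (hD₂ : D₂ ⊆ w.le (i - 1))
    (M : C) (hM : Envelope D M)
    (horth : ∀ N ∈ D₂, ∀ f : N ⟶ M, f = 0) :
    M ∈ w.ge i :=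
  stmt_15_general w i D D₁ D₂ hD hD₁ hD₂ M hM horth
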